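/- (Non-expansion after reaching statistical accuracy.) In the one-step sample setting, write ε_stat = κ·√(d log d / n)·σ. If D ≤ 50 ε_stat and ‖Δ‖ ≤ D + ε_stat, then D⁺ ≤ 100 ε_stat. -/

import Mathlib

/-!
With `M = F Fᵀ - X* + Δ` the update is `F⁺ = F - η M F`, so each block of `D⁺` exceeds the
corresponding block of `D` by at most `2η ‖M‖ ‖F‖² + η² ‖M‖² ‖F‖²`. Writing `F = U S + V T` gives
`‖F Fᵀ - X*‖ ≤ 4D + ‖D_T*‖ ≤ 201 ε_stat`, hence `‖M‖ ≤ 252 ε_stat`; the sample size forces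
`ε_stat ≤ σ_r / 500`, so `‖F‖² ≤ ‖X*‖ + 201 ε_stat ≤ 2σ₁`. With `η = 1/(100σ₁)` the increase is
then about `10 ε_stat`, well within the `50 ε_stat` of slack.
-/

open Matrix
open scoped Matrix.Norms.L2Operator

namespace Matrix

variable {m n l : Type*} [Fintype m] [Fintype n] [Fintype l]

lemma l2_opNorm_transpose [DecidableEq m] [DecidableEq n] (A : Matrix m n ℝ) : ‖Aᵀ‖ = ‖A‖ := by
  rw [← conjTranspose_eq_transpose_of_trivial, l2_opNorm_conjTranspose]

lemma l2_opNorm_mul_transpose_le [DecidableEq n] [DecidableEq l] (A : Matrix m l ℝ)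
    (B : Matrix n l ℝ) : ‖A * Bᵀ‖ ≤ ‖A‖ * ‖B‖ :=
  (l2_opNorm_mul A Bᵀ).trans_eq (by rw [l2_opNorm_transpose])

lemma l2_opNorm_mul_transpose_self [DecidableEq m] [DecidableEq n] (A : Matrix m n ℝ) :
    ‖A * Aᵀ‖ = ‖A‖ * ‖A‖ := by
  simpa [conjTranspose_eq_transpose_of_trivial, l2_opNorm_transpose] using
    l2_opNorm_conjTranspose_mul_self Aᵀ

lemma l2_opNorm_le_of_isDiag [DecidableEq n] {A : Matrix n n ℝ} (hA : A.IsDiag) {c : ℝ}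
    (hc : 0 ≤ c) (h : ∀ i, |A i i| ≤ c) : ‖A‖ ≤ c := by
  rw [← hA.diagonal_diag, l2_opNorm_diagonal, pi_norm_le_iff_of_nonneg hc]
  exact h

lemma l2_opNorm_le_one_of_transpose_mul_self_eq_one [DecidableEq n] {U : Matrix m n ℝ}
    (hU : Uᵀ * U = 1) : ‖U‖ ≤ 1 := by
  have hone : ‖(1 : Matrix n n ℝ)‖ ≤ 1 := by
    rw [← diagonal_one, l2_opNorm_diagonal, pi_norm_le_iff_of_nonneg zero_le_one]
    simp
  have hsq : ‖U‖ * ‖U‖ ≤ 1 := by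
    rwa [← l2_opNorm_conjTranspose_mul_self, conjTranspose_eq_transpose_of_trivial, hU]
  nlinarith [norm_nonneg U]

lemma l2_opNorm_mul_le_of_l2_opNorm_le_one [DecidableEq n] [DecidableEq l] {W : Matrix m n ℝ}
    (hW : ‖W‖ ≤ 1) (A : Matrix n l ℝ) : ‖W * A‖ ≤ ‖A‖ :=
  (l2_opNorm_mul W A).trans (mul_le_of_le_one_left (norm_nonneg A) hW)

lemma l2_opNorm_mul_mul_transpose_le {o : Type*} [Fintype o] [DecidableEq n] [DecidableEq l]
    [DecidableEq o] {U : Matrix m n ℝ} {V : Matrix l o ℝ} (hU : ‖U‖ ≤ 1) (hV : ‖V‖ ≤ 1)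
    (A : Matrix n o ℝ) :
    ‖U * A * Vᵀ‖ ≤ ‖A‖ :=
  calc ‖U * A * Vᵀ‖ ≤ ‖U * A‖ * ‖V‖ := l2_opNorm_mul_transpose_le _ _
    _ ≤ ‖U * A‖ := mul_le_of_le_one_right (norm_nonneg _) hV
    _ ≤ ‖A‖ := l2_opNorm_mul_le_of_l2_opNorm_le_one hU A

lemma l2_opNorm_sub_smul_mul_transpose_sub_smul_sub_le [DecidableEq n] [DecidableEq l] {η : ℝ}
    (hη : 0 ≤ η) (A E : Matrix m l ℝ) (B E' : Matrix n l ℝ) (C : Matrix m n ℝ) :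
    ‖(A - η • E) * (B - η • E')ᵀ - C‖
      ≤ ‖A * Bᵀ - C‖ + η * (‖E‖ * ‖B‖ + ‖A‖ * ‖E'‖) + η ^ 2 * (‖E‖ * ‖E'‖) := by
  have hexpand : (A - η • E) * (B - η • E')ᵀ - C
      = (A * Bᵀ - C) - η • (E * Bᵀ + A * E'ᵀ) + η ^ 2 • (E * E'ᵀ) := by
    simp only [transpose_sub, transpose_smul, Matrix.sub_mul, Matrix.mul_sub, Matrix.smul_mul,
      Matrix.mul_smul, smul_sub, smul_smul, smul_add, sq]
    abel
  rw [hexpand]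
  refine (norm_add_le _ _).trans (add_le_add ((norm_sub_le _ _).trans ?_) ?_)
  · rw [norm_smul, Real.norm_of_nonneg hη]
    gcongr
    exact (norm_add_le _ _).trans
      (add_le_add (l2_opNorm_mul_transpose_le _ _) (l2_opNorm_mul_transpose_le _ _))
  · rw [norm_smul, Real.norm_of_nonneg (by positivity)]
    gcongr
    exact l2_opNorm_mul_transpose_le _ _

lemma l2_opNorm_mul_mul_transpose_add_le [DecidableEq m] [DecidableEq n] [DecidableEq l]
    {U : Matrix m n ℝ} {V : Matrix m l ℝ} (hU : ‖U‖ ≤ 1) (hV : ‖V‖ ≤ 1) (A : Matrix n n ℝ)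
    (B : Matrix l l ℝ) : ‖U * A * Uᵀ + V * B * Vᵀ‖ ≤ ‖A‖ + ‖B‖ :=
  (norm_add_le _ _).trans
    (add_le_add (l2_opNorm_mul_mul_transpose_le hU hU A) (l2_opNorm_mul_mul_transpose_le hV hV B))

lemma l2_opNorm_mul_transpose_sub_le_of_blocks {o : Type*} [Fintype o] [DecidableEq m]
    [DecidableEq n] [DecidableEq l] [DecidableEq o] {U : Matrix m n ℝ} {V : Matrix m l ℝ}
    (hU : ‖U‖ ≤ 1) (hV : ‖V‖ ≤ 1) (hUV : U * Uᵀ + V * Vᵀ = 1) (F : Matrix m o ℝ)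
    (A : Matrix n n ℝ) (B : Matrix l l ℝ) :
    ‖F * Fᵀ - (U * A * Uᵀ + V * B * Vᵀ)‖
      ≤ ‖(Uᵀ * F) * (Uᵀ * F)ᵀ - A‖ + 2 * ‖(Uᵀ * F) * (Vᵀ * F)ᵀ‖
        + ‖(Vᵀ * F) * (Vᵀ * F)ᵀ - B‖ := by
  set S := Uᵀ * F
  set T := Vᵀ * F
  have hF : F = U * S + V * T := by
    rw [← Matrix.mul_assoc, ← Matrix.mul_assoc, ← Matrix.add_mul, hUV, Matrix.one_mul]
  have hblocks : F * Fᵀ - (U * A * Uᵀ + V * B * Vᵀ)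
      = U * (S * Sᵀ - A) * Uᵀ + U * (S * Tᵀ) * Vᵀ + V * (S * Tᵀ)ᵀ * Uᵀ
        + V * (T * Tᵀ - B) * Vᵀ := by
    rw [hF]
    simp only [transpose_add, transpose_mul, transpose_transpose, Matrix.add_mul, Matrix.mul_add,
      Matrix.sub_mul, Matrix.mul_sub, Matrix.mul_assoc]
    abel
  rw [hblocks]
  have h₁ := l2_opNorm_mul_mul_transpose_le hU hU (S * Sᵀ - A)
  have h₂ := l2_opNorm_mul_mul_transpose_le hU hV (S * Tᵀ)
  have h₃ := l2_opNorm_mul_mul_transpose_le hV hU (S * Tᵀ)ᵀ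
  have h₄ := l2_opNorm_mul_mul_transpose_le hV hV (T * Tᵀ - B)
  rw [l2_opNorm_transpose] at h₃
  refine (norm_add_le _ _).trans ?_
  linarith [norm_add_le (U * (S * Sᵀ - A) * Uᵀ + U * (S * Tᵀ) * Vᵀ) (V * (S * Tᵀ)ᵀ * Uᵀ),
    norm_add_le (U * (S * Sᵀ - A) * Uᵀ) (U * (S * Tᵀ) * Vᵀ)]

lemma sq_l2_opNorm_le_of_mul_transpose_sub_le [DecidableEq m] [DecidableEq n]
    {F : Matrix m n ℝ} {X : Matrix m m ℝ} {a b : ℝ} (hX : ‖X‖ ≤ a) (h : ‖F * Fᵀ - X‖ ≤ b) :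
    ‖F‖ ^ 2 ≤ a + b := by
  rw [sq, ← l2_opNorm_mul_transpose_self, ← add_sub_cancel X (F * Fᵀ)]
  exact (norm_add_le _ _).trans (add_le_add hX h)

lemma l2_opNorm_gradient_step_sub_le {p q : Type*} [Fintype p] [Fintype q] [DecidableEq m]
    [DecidableEq n] [DecidableEq p] [DecidableEq q] {W₁ : Matrix p m ℝ} {W₂ : Matrix q m ℝ}
    (hW₁ : ‖W₁‖ ≤ 1) (hW₂ : ‖W₂‖ ≤ 1) {F : Matrix m n ℝ} {M : Matrix m m ℝ}
    {C : Matrix p q ℝ} {σ₁ ε : ℝ} (hσ₁ : 0 < σ₁) (hε : 0 ≤ ε) (hεσ₁ : 500 * ε ≤ σ₁)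
    (hF : ‖F‖ ^ 2 ≤ 2 * σ₁) (hM : ‖M‖ ≤ 252 * ε) (hC : ‖(W₁ * F) * (W₂ * F)ᵀ - C‖ ≤ 50 * ε) :
    ‖(W₁ * (F - (1 / (100 * σ₁)) • (M * F))) * (W₂ * (F - (1 / (100 * σ₁)) • (M * F)))ᵀ - C‖
      ≤ 100 * ε := by
  set f := ‖F‖
  have hMF : ‖M * F‖ ≤ 252 * ε * f :=
    (l2_opNorm_mul M F).trans (mul_le_mul_of_nonneg_right hM (norm_nonneg F))
  have hf : 0 ≤ f := norm_nonneg F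
  have hA₁ := l2_opNorm_mul_le_of_l2_opNorm_le_one hW₁ F
  have hA₂ := l2_opNorm_mul_le_of_l2_opNorm_le_one hW₂ F
  have hE₁ := (l2_opNorm_mul_le_of_l2_opNorm_le_one hW₁ (M * F)).trans hMF
  have hE₂ := (l2_opNorm_mul_le_of_l2_opNorm_le_one hW₂ (M * F)).trans hMF
  have hEA : ∀ {x y : ℝ}, x ≤ 252 * ε * f → y ≤ f → 0 ≤ y → x * y ≤ 504 * ε * σ₁ :=
    fun hx hy hy₀ ↦ by nlinarith [mul_le_mul hx hy hy₀ (by positivity : 0 ≤ 252 * ε * f)]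
  have hEE : ‖W₁ * (M * F)‖ * ‖W₂ * (M * F)‖ ≤ 255 * ε * σ₁ ^ 2 :=
    calc _ ≤ 252 * ε * f * (252 * ε * f) := mul_le_mul hE₁ hE₂ (norm_nonneg _) (by positivity)
      _ = 63504 * ε * ε * f ^ 2 := by ring
      _ ≤ 63504 * ε * (σ₁ / 500) * (2 * σ₁) := by gcongr; linarith
      _ ≤ 255 * ε * σ₁ ^ 2 := by nlinarith
  rw [Matrix.mul_sub, Matrix.mul_sub, Matrix.mul_smul, Matrix.mul_smul]
  calc _ ≤ ‖(W₁ * F) * (W₂ * F)ᵀ - C‖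
        + 1 / (100 * σ₁) * (‖W₁ * (M * F)‖ * ‖W₂ * F‖ + ‖W₂ * (M * F)‖ * ‖W₁ * F‖)
        + (1 / (100 * σ₁)) ^ 2 * (‖W₁ * (M * F)‖ * ‖W₂ * (M * F)‖) := by
        rw [mul_comm ‖W₂ * (M * F)‖]
        exact l2_opNorm_sub_smul_mul_transpose_sub_smul_sub_le (by positivity) _ _ _ _ _
    _ ≤ 50 * ε + 1 / (100 * σ₁) * (504 * ε * σ₁ + 504 * ε * σ₁)
        + (1 / (100 * σ₁)) ^ 2 * (255 * ε * σ₁ ^ 2) := by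
        gcongr ?_ + _ * (?_ + ?_) + _ * ?_
        exacts [hEA hE₁ hA₂ (norm_nonneg _), hEA hE₂ hA₁ (norm_nonneg _)]
    _ = (50 + 1008 / 100 + 255 / 10000) * ε := by field_simp; ring
    _ ≤ 100 * ε := by gcongr; norm_num

lemma max_l2_opNorm_gradient_step_blocks_le {o : Type*} [Fintype o] [DecidableEq m]
    [DecidableEq n] [DecidableEq l] [DecidableEq o] {U : Matrix m n ℝ} {V : Matrix m l ℝ}
    (hU : ‖U‖ ≤ 1) (hV : ‖V‖ ≤ 1) (hUV : U * Uᵀ + V * Vᵀ = 1) {A : Matrix n n ℝ}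
    {B : Matrix l l ℝ} {Δ : Matrix m m ℝ} {F : Matrix m o ℝ} {σ₁ ε : ℝ} (hσ₁ : 0 < σ₁)
    (hε : 0 ≤ ε) (hεσ₁ : 500 * ε ≤ σ₁) (hA : ‖A‖ ≤ σ₁) (hB : ‖B‖ ≤ ε) (hΔ : ‖Δ‖ ≤ 51 * ε)
    (hD : max (max ‖(Uᵀ * F) * (Uᵀ * F)ᵀ - A‖ ‖(Vᵀ * F) * (Vᵀ * F)ᵀ‖) ‖(Uᵀ * F) * (Vᵀ * F)ᵀ‖
      ≤ 50 * ε) :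
    let F' := F - (1 / (100 * σ₁)) • ((F * Fᵀ - (U * A * Uᵀ + V * B * Vᵀ)) * F + Δ * F)
    max (max ‖(Uᵀ * F') * (Uᵀ * F')ᵀ - A‖ ‖(Vᵀ * F') * (Vᵀ * F')ᵀ‖) ‖(Uᵀ * F') * (Vᵀ * F')ᵀ‖
      ≤ 100 * ε := by
  intro F'
  obtain ⟨⟨hSS, hTT⟩, hST⟩ := by simpa only [max_le_iff] using hD
  have hres : ‖F * Fᵀ - (U * A * Uᵀ + V * B * Vᵀ)‖ ≤ 201 * ε := by
    refine (l2_opNorm_mul_transpose_sub_le_of_blocks hU hV hUV F A B).trans ?_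
    linarith [norm_sub_le ((Vᵀ * F) * (Vᵀ * F)ᵀ) B]
  have hF : ‖F‖ ^ 2 ≤ 2 * σ₁ :=
    (sq_l2_opNorm_le_of_mul_transpose_sub_le
      ((l2_opNorm_mul_mul_transpose_add_le hU hV A B).trans (add_le_add hA hB)) hres).trans
      (by linarith)
  have hM : ‖F * Fᵀ - (U * A * Uᵀ + V * B * Vᵀ) + Δ‖ ≤ 252 * ε :=
    (norm_add_le _ _).trans (by linarith)
  have hUt : ‖Uᵀ‖ ≤ 1 := by rwa [l2_opNorm_transpose]
  have hVt : ‖Vᵀ‖ ≤ 1 := by rwa [l2_opNorm_transpose]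
  simp only [F', ← Matrix.add_mul]
  refine max_le (max_le ?_ ?_) ?_
  · exact l2_opNorm_gradient_step_sub_le hUt hUt hσ₁ hε hεσ₁ hF hM hSS
  · simpa only [sub_zero] using l2_opNorm_gradient_step_sub_le (C := 0) hVt hVt hσ₁ hε hεσ₁
      hF hM (by rwa [sub_zero])
  · simpa only [sub_zero] using l2_opNorm_gradient_step_sub_le (C := 0) hUt hVt hσ₁ hε hεσ₁
      hF hM (by rwa [sub_zero])

end Matrix

lemma stat_error_le {k d n L κ σ σr : ℝ} (hσr : 0 < σr) (hκ : 0 ≤ κ) (hσ : 0 ≤ σ) (hk : 1 ≤ k)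
    (hd : 0 ≤ d) (hn : 0 ≤ n) (hL : 1 / 2 ≤ L)
    (h : 10 ^ 6 * k * κ ^ 2 * d * L ^ 3 * max 1 (σ ^ 2 / σr ^ 2) ≤ n) :
    500 * (κ * √(d * L / n) * σ) ≤ σr := by
  set M := max 1 (σ ^ 2 / σr ^ 2)
  have hM : σ ^ 2 ≤ M * σr ^ 2 := (div_le_iff₀ (by positivity)).1 (le_max_right _ _)
  have hL3 : 250000 * L ≤ 10 ^ 6 * k * L ^ 3 :=
    calc 250000 * L = 10 ^ 6 * 1 * (1 / 2) ^ 2 * L := by ring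
      _ ≤ 10 ^ 6 * k * L ^ 2 * L := by gcongr
      _ = 10 ^ 6 * k * L ^ 3 := by ring
  have hscaled : 250000 * κ ^ 2 * d * L * σ ^ 2 ≤ σr ^ 2 * n :=
    calc 250000 * κ ^ 2 * d * L * σ ^ 2 ≤ 250000 * κ ^ 2 * d * L * (M * σr ^ 2) := by gcongr
      _ = κ ^ 2 * d * M * σr ^ 2 * (250000 * L) := by ring
      _ ≤ κ ^ 2 * d * M * σr ^ 2 * (10 ^ 6 * k * L ^ 3) := by
        have : 0 ≤ M := zero_le_one.trans (le_max_left _ _)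
        gcongr
      _ = σr ^ 2 * (10 ^ 6 * k * κ ^ 2 * d * L ^ 3 * M) := by ring
      _ ≤ σr ^ 2 * n := by gcongr
  refine (pow_le_pow_iff_left₀ (by positivity) hσr.le two_ne_zero).1 ?_
  rw [mul_pow, mul_pow, mul_pow, Real.sq_sqrt (by positivity)]
  calc _ = 250000 * κ ^ 2 * d * L * σ ^ 2 / n := by ring
    _ ≤ σr ^ 2 := div_le_of_le_mul₀ hn (sq_nonneg _) (by linarith)

lemma one_half_le_log_of_two_le {d : ℕ} (hd : 2 ≤ d) : 1 / 2 ≤ Real.log d := by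
  have := Real.log_le_log two_pos (by exact_mod_cast hd : (2 : ℝ) ≤ d)
  linarith [Real.log_two_gt_d9]

theorem stmt_17_general
    (d k r : ℕ) (hd : 2 ≤ d) (hr : 0 < r) (hrk : r ≤ k)
    (U : Matrix (Fin d) (Fin r) ℝ) (V : Matrix (Fin d) (Fin (d - r)) ℝ)
    (hU : Uᵀ * U = 1) (hV : Vᵀ * V = 1)
    (hUVc : U * Uᵀ + V * Vᵀ = 1)
    (σr σ1 : ℝ) (hσr : 0 < σr)
    (DS : Matrix (Fin r) (Fin r) ℝ) (hDS : DS.IsDiag)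
    (hDSlb : ∀ i, σr ≤ DS i i) (hDSub : ∀ i, DS i i ≤ σ1)
    (DT : Matrix (Fin (d - r)) (Fin (d - r)) ℝ)
    (κ : ℝ) (hκ : κ = σ1 / σr)
    (η : ℝ) (hη : η = 1 / (100 * σ1))
    (X : Matrix (Fin d) (Fin d) ℝ) (hX : X = U * DS * Uᵀ + V * DT * Vᵀ)
    (F : Matrix (Fin d) (Fin k) ℝ)
    (S : Matrix (Fin r) (Fin k) ℝ) (hS : S = Uᵀ * F)
    (T : Matrix (Fin (d - r)) (Fin k) ℝ) (hT : T = Vᵀ * F)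
    (G : Matrix (Fin d) (Fin k) ℝ) (hG : G = (F * Fᵀ - X) * F)
    (σ : ℝ) (hσ : 0 ≤ σ)
    (n : ℕ)
    (hnbig : (10 : ℝ) ^ 6 * k * κ ^ 2 * d * (Real.log d) ^ 3 * max 1 (σ ^ 2 / σr ^ 2) ≤ n)
    (Δ : Matrix (Fin d) (Fin d) ℝ)
    (Fp : Matrix (Fin d) (Fin k) ℝ) (hFp : Fp = F - η • (G + Δ * F))
    (Sp : Matrix (Fin r) (Fin k) ℝ) (hSp : Sp = Uᵀ * Fp)
    (Tp : Matrix (Fin (d - r)) (Fin k) ℝ) (hTp : Tp = Vᵀ * Fp)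
    (D : ℝ) (hD : D = max (max ‖S * Sᵀ - DS‖ ‖T * Tᵀ‖) ‖S * Tᵀ‖)
    (hDTsmall : ‖DT‖ ≤ Real.sqrt (d * Real.log d / n) * σ)
    (Dp : ℝ) (hDp : Dp = max (max ‖Sp * Spᵀ - DS‖ ‖Tp * Tpᵀ‖) ‖Sp * Tpᵀ‖)
    (εstat : ℝ) (hεstat : εstat = κ * Real.sqrt (d * Real.log d / n) * σ)
    (hDsmall : D ≤ 50 * εstat)
    (hΔ : ‖Δ‖ ≤ D + εstat) :
    Dp ≤ 100 * εstat := by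
  subst hκ hη hX hG hFp hSp hTp hDp hS hT hD
  have hσ₁ : σr ≤ σ1 := (hDSlb ⟨0, hr⟩).trans (hDSub ⟨0, hr⟩)
  have hσ₁pos : 0 < σ1 := hσr.trans_le hσ₁
  have hε : 0 ≤ εstat := by rw [hεstat]; positivity
  have hεσ₁ : 500 * εstat ≤ σ1 := by
    refine le_trans ?_ hσ₁
    rw [hεstat]
    exact stat_error_le hσr (by positivity) hσ (by exact_mod_cast hr.trans_le hrk)
      (by positivity) (by positivity) (one_half_le_log_of_two_le hd) hnbig
  have hDSn : ‖DS‖ ≤ σ1 := l2_opNorm_le_of_isDiag hDS hσ₁pos.le fun i ↦ by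
    rw [abs_of_pos (hσr.trans_le (hDSlb i))]
    exact hDSub i
  have hDTn : ‖DT‖ ≤ εstat := hDTsmall.trans <| by
    rw [hεstat, mul_assoc]
    exact le_mul_of_one_le_left (by positivity) ((one_le_div hσr).2 hσ₁)
  exact max_l2_opNorm_gradient_step_blocks_le (l2_opNorm_le_one_of_transpose_mul_self_eq_one hU)
    (l2_opNorm_le_one_of_transpose_mul_self_eq_one hV) hUVc hσ₁pos hε hεσ₁ hDSn hDTn
    (by linarith) hDsmall

theorem stmt_17
    (d k r : ℕ) (hd : 2 ≤ d) (hr : 0 < r) (hrk : r ≤ k) (hkd : k ≤ d)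
    (U : Matrix (Fin d) (Fin r) ℝ) (V : Matrix (Fin d) (Fin (d - r)) ℝ)
    (hU : Uᵀ * U = 1) (hV : Vᵀ * V = 1) (hUV : Uᵀ * V = 0)
    (hUVc : U * Uᵀ + V * Vᵀ = 1)
    (σr σ1 : ℝ) (hσr : 0 < σr)
    (DS : Matrix (Fin r) (Fin r) ℝ) (hDS : DS.IsDiag)
    (hDSlb : ∀ i, σr ≤ DS i i) (hDSub : ∀ i, DS i i ≤ σ1)
    (DT : Matrix (Fin (d - r)) (Fin (d - r)) ℝ) (hDT : DT.IsDiag)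
    (hDTnn : ∀ i, 0 ≤ DT i i)
    (κ : ℝ) (hκ : κ = σ1 / σr)
    (η : ℝ) (hη : η = 1 / (100 * σ1))
    (X : Matrix (Fin d) (Fin d) ℝ) (hX : X = U * DS * Uᵀ + V * DT * Vᵀ)
    (F : Matrix (Fin d) (Fin k) ℝ)
    (S : Matrix (Fin r) (Fin k) ℝ) (hS : S = Uᵀ * F)
    (T : Matrix (Fin (d - r)) (Fin k) ℝ) (hT : T = Vᵀ * F)
    (G : Matrix (Fin d) (Fin k) ℝ) (hG : G = (F * Fᵀ - X) * F)
    (σ : ℝ) (hσ : 0 ≤ σ)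
    (n : ℕ) (hn : 0 < n)
    (hnbig : (10 : ℝ) ^ 6 * k * κ ^ 2 * d * (Real.log d) ^ 3 * max 1 (σ ^ 2 / σr ^ 2) ≤ n)
    (Δ : Matrix (Fin d) (Fin d) ℝ) (hΔsymm : Δ.IsSymm)
    (Fp : Matrix (Fin d) (Fin k) ℝ) (hFp : Fp = F - η • (G + Δ * F))
    (Sp : Matrix (Fin r) (Fin k) ℝ) (hSp : Sp = Uᵀ * Fp)
    (Tp : Matrix (Fin (d - r)) (Fin k) ℝ) (hTp : Tp = Vᵀ * Fp)
    (D : ℝ) (hD : D = max (max ‖S * Sᵀ - DS‖ ‖T * Tᵀ‖) ‖S * Tᵀ‖)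
    (hDTsmall : ‖DT‖ ≤ Real.sqrt (d * Real.log d / n) * σ)
    (Dp : ℝ) (hDp : Dp = max (max ‖Sp * Spᵀ - DS‖ ‖Tp * Tpᵀ‖) ‖Sp * Tpᵀ‖)
    (εstat : ℝ) (hεstat : εstat = κ * Real.sqrt (d * Real.log d / n) * σ)
    (hDsmall : D ≤ 50 * εstat)
    (hΔ : ‖Δ‖ ≤ D + εstat) :
    Dp ≤ 100 * εstat :=
  stmt_17_general d k r hd hr hrk U V hU hV hUVc σr σ1 hσr DS hDS hDSlb hDSub DT κ hκ η hη X hX F S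
    hS T hT G hG σ hσ n hnbig Δ Fp hFp Sp hSp Tp hTp D hD hDTsmall Dp hDp εstat hεstat hDsmall hΔ
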